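/- arXiv:1601.08136 — 3 statements merged into one kernel-verified Lean document; each statement's English description precedes it below -/
import Mathlib

section
/- For 0 < α < 1, λ > 0 and Re(s) > λ^{1/α}, the Laplace transform of t ↦ E_α(-λ t^α) equals s^{α-1}/(λ + s^α), i.e. ∫_0^∞ e^{-st} E_α(-λ t^α) dt = s^{α-1}/(λ + s^α). -/
/-!
Expanding `E_α(z t^α)` termwise, the `k`-th term contributes
`z^k / Γ(αk+1) · ∫₀^∞ t^(αk) e^(-st) dt = z^k / s^(αk+1)`, and these sum to `s^(α-1) / (s^α - z)`.
Sum and integral may be exchanged because the same computation with `‖z‖` and `Re s` gives the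
geometric series `∑ ‖z‖^k / (Re s)^(αk+1)`, which converges when `‖z‖ < (Re s)^α`; for `z = -λ`
this is `Re s > λ^(1/α)`. The Gamma integral `∫₀^∞ t^(a-1) e^(-st) dt = Γ(a) / s^a` is in Mathlib
only for real `s > 0`; both sides are holomorphic on `Re s > 0`, so it extends there by the
identity theorem.
-/

open MeasureTheory Set Complex Filter Topology

lemma norm_cpow_mul_cexp_neg_mul {a s : ℂ} {t : ℝ} (ht : 0 < t) :
    ‖(t : ℂ) ^ (a - 1) * cexp (-(s * t))‖ = t ^ (a.re - 1) * Real.exp (-(s.re * t)) := by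
  rw [norm_mul, norm_cpow_eq_rpow_re_of_pos ht, norm_exp]
  simp

lemma integrableOn_cpow_mul_cexp_neg_mul_Ioi {a s : ℂ} (ha : 0 < a.re) (hs : 0 < s.re) :
    IntegrableOn (fun t : ℝ ↦ (t : ℂ) ^ (a - 1) * cexp (-(s * t))) (Ioi 0) := by
  have hbound : IntegrableOn (fun t : ℝ ↦ t ^ (a.re - 1) * Real.exp (-(s.re * t))) (Ioi 0) := by
    simpa using integrableOn_rpow_mul_exp_neg_mul_rpow (by linarith) zero_lt_one hs
  refine hbound.mono' (by fun_prop) ?_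
  filter_upwards [ae_restrict_mem measurableSet_Ioi] with t ht
  exact (norm_cpow_mul_cexp_neg_mul ht).le

lemma integral_norm_cpow_mul_cexp_neg_mul_Ioi {a s : ℂ} (ha : 0 < a.re) (hs : 0 < s.re) :
    ∫ t in Ioi (0 : ℝ), ‖(t : ℂ) ^ (a - 1) * cexp (-(s * t))‖ = Real.Gamma a.re / s.re ^ a.re := by
  rw [setIntegral_congr_fun measurableSet_Ioi fun t ht ↦ norm_cpow_mul_cexp_neg_mul ht,
    Real.integral_rpow_mul_exp_neg_mul_Ioi ha hs, one_div, Real.inv_rpow hs.le]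
  ring

lemma differentiableOn_integral_cpow_mul_cexp_neg_mul_Ioi {a : ℂ} (ha : 0 < a.re) :
    DifferentiableOn ℂ (fun s : ℂ ↦ ∫ t in Ioi (0 : ℝ), (t : ℂ) ^ (a - 1) * cexp (-(s * t)))
      {s | 0 < s.re} := by
  intro z (hz : 0 < z.re)
  have hnhds : {w : ℂ | z.re / 2 < w.re} ∈ 𝓝 z :=
    (isOpen_lt continuous_const continuous_re).mem_nhds (show z.re / 2 < z.re by linarith)
  have hbound : IntegrableOn (fun t : ℝ ↦ t ^ a.re * Real.exp (-(z.re / 2 * t))) (Ioi 0) := by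
    simpa using integrableOn_rpow_mul_exp_neg_mul_rpow (by linarith) zero_lt_one (half_pos hz)
  refine (hasDerivAt_integral_of_dominated_loc_of_deriv_le
    (μ := volume.restrict (Ioi 0)) (F := fun w (t : ℝ) ↦ (t : ℂ) ^ (a - 1) * cexp (-(w * t)))
    (F' := fun w t ↦ (t : ℂ) ^ (a - 1) * (cexp (-(w * t)) * -t)) hnhds
    (.of_forall fun w ↦ by fun_prop) (integrableOn_cpow_mul_cexp_neg_mul_Ioi ha hz)
    (by fun_prop) ?_ hbound ?_).2.differentiableAt.differentiableWithinAt
  · filter_upwards [ae_restrict_mem measurableSet_Ioi] with t (ht : 0 < t) w (hw : z.re / 2 < w.re)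
    rw [← mul_assoc, norm_mul, norm_cpow_mul_cexp_neg_mul ht, norm_neg,
      norm_real, Real.norm_of_nonneg ht.le, mul_right_comm, ← Real.rpow_add_one ht.ne',
      sub_add_cancel]
    gcongr
  · refine .of_forall fun t w _ ↦ ?_
    exact ((((hasDerivAt_id w).mul_const (t : ℂ)).neg).cexp.const_mul _).congr_deriv (by simp)

lemma eqOn_re_pos_of_eq_ofReal {f g : ℂ → ℂ} (hf : DifferentiableOn ℂ f {z | 0 < z.re})
    (hg : DifferentiableOn ℂ g {z | 0 < z.re}) (hfg : ∀ r : ℝ, 0 < r → f r = g r) :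
    EqOn f g {z | 0 < z.re} := by
  have hU : IsOpen {z : ℂ | 0 < z.re} := isOpen_lt continuous_const continuous_re
  refine (hf.analyticOnNhd hU).eqOn_of_preconnected_of_frequently_eq (hg.analyticOnNhd hU)
    (convex_halfSpace_re_gt 0).isPreconnected (z₀ := 1) (by simp) ?_
  have hmaps : Tendsto ((↑) : ℝ → ℂ) (𝓝[≠] 1) (𝓝[≠] 1) :=
    continuous_ofReal.continuousWithinAt.tendsto_nhdsWithin fun r hr ↦ by simpa using hr
  refine hmaps.frequently (Eventually.frequently ?_)
  filter_upwards [nhdsWithin_le_nhds (eventually_gt_nhds one_pos)] with r hr using hfg r hr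

lemma integral_cpow_mul_cexp_neg_mul_Ioi {a s : ℂ} (ha : 0 < a.re) (hs : 0 < s.re) :
    ∫ t in Ioi (0 : ℝ), (t : ℂ) ^ (a - 1) * cexp (-(s * t)) = Gamma a / s ^ a := by
  refine eqOn_re_pos_of_eq_ofReal (g := fun s ↦ Gamma a / s ^ a)
    (differentiableOn_integral_cpow_mul_cexp_neg_mul_Ioi ha) ?_ (fun r hr ↦ ?_) hs
  · intro z (hz : 0 < z.re)
    have hz0 : z ≠ 0 := fun h ↦ by simp [h] at hz
    refine (DifferentiableAt.div (differentiableAt_const _)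
      (differentiableAt_id.cpow (differentiableAt_const _) (Or.inl hz)) ?_).differentiableWithinAt
    simp [cpow_eq_zero_iff, hz0]
  · have harg : (r : ℂ).arg ≠ Real.pi := by
      rw [arg_ofReal_of_nonneg hr.le]; exact Real.pi_ne_zero.symm
    rw [integral_cpow_mul_exp_neg_mul_Ioi ha hr, one_div, inv_cpow _ _ harg]
    ring

theorem integral_cexp_neg_mul_mul_tsum_cpow {α : ℝ} (hα : 0 ≤ α) {s : ℂ} (hs : 0 < s.re)
    {c : ℕ → ℂ} (hc : Summable fun k : ℕ ↦ ‖c k‖ * (Real.Gamma (α * k + 1) / s.re ^ (α * k + 1))) :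
    ∫ t in Ioi (0 : ℝ), cexp (-(s * t)) * ∑' k, c k * (t : ℂ) ^ ((α : ℂ) * k)
      = ∑' k, c k * (Gamma (α * k + 1) / s ^ ((α : ℂ) * k + 1)) := by
  set F : ℕ → ℝ → ℂ := fun k t ↦ c k * ((t : ℂ) ^ ((α * k + 1 : ℂ) - 1) * cexp (-(s * t)))
  have ha (k : ℕ) : 0 < ((α : ℂ) * k + 1).re := by
    simp only [add_re, mul_re, ofReal_re, natCast_re, ofReal_im, natCast_im, mul_zero, sub_zero,
      one_re]
    positivity
  have hF_int (k : ℕ) : Integrable (F k) (volume.restrict (Ioi 0)) :=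
    (integrableOn_cpow_mul_cexp_neg_mul_Ioi (ha k) hs).const_mul _
  have hF_norm (k : ℕ) : ∫ t in Ioi (0 : ℝ), ‖F k t‖
      = ‖c k‖ * (Real.Gamma (α * k + 1) / s.re ^ (α * k + 1)) := by
    simp only [F, norm_mul (c k), integral_const_mul]
    rw [integral_norm_cpow_mul_cexp_neg_mul_Ioi (ha k) hs]
    simp
  have hF_sum : Summable fun k ↦ ∫ t in Ioi (0 : ℝ), ‖F k t‖ := by
    simpa only [hF_norm] using hc
  calc ∫ t in Ioi (0 : ℝ), cexp (-(s * t)) * ∑' k, c k * (t : ℂ) ^ ((α : ℂ) * k)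
      = ∫ t in Ioi (0 : ℝ), ∑' k, F k t := by
        refine integral_congr_ae (.of_forall fun t ↦ ?_)
        simp only [F, add_sub_cancel_right, ← tsum_mul_left]
        refine tsum_congr fun k ↦ ?_
        ring
    _ = ∑' k, ∫ t in Ioi (0 : ℝ), F k t :=
        (integral_tsum_of_summable_integral_norm hF_int hF_sum).symm
    _ = ∑' k, c k * (Gamma (α * k + 1) / s ^ ((α : ℂ) * k + 1)) := by
        refine tsum_congr fun k ↦ ?_
        rw [integral_const_mul, integral_cpow_mul_cexp_neg_mul_Ioi (ha k) hs]

lemma norm_Gamma_mul_natCast_add_one {α : ℝ} (hα : 0 ≤ α) (k : ℕ) :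
    ‖Gamma (α * k + 1)‖ = Real.Gamma (α * k + 1) := by
  rw [show (α * k + 1 : ℂ) = ((α * k + 1 : ℝ) : ℂ) by push_cast; ring, Gamma_ofReal, norm_real,
    Real.norm_of_nonneg (Real.Gamma_pos_of_pos (by positivity)).le]

lemma summable_norm_pow_div_Gamma_mul_Gamma_div_rpow {α σ : ℝ} (hα : 0 ≤ α) (hσ : 0 < σ)
    {z : ℂ} (hz : ‖z‖ < σ ^ α) :
    Summable fun k : ℕ ↦
      ‖z ^ k / Gamma (α * k + 1)‖ * (Real.Gamma (α * k + 1) / σ ^ (α * k + 1)) := by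
  refine ((summable_geometric_of_lt_one (by positivity)
    ((div_lt_one (by positivity)).2 hz)).mul_right σ⁻¹).congr fun k ↦ ?_
  rw [div_pow, norm_div, norm_Gamma_mul_natCast_add_one hα, norm_pow,
    Real.rpow_add_one hσ.ne', Real.rpow_mul_natCast hσ.le]
  field_simp [(Real.Gamma_pos_of_pos (by positivity : 0 < α * k + 1)).ne']

theorem integral_cexp_neg_mul_mul_mittagLeffler {α : ℝ} (hα : 0 ≤ α) {s z : ℂ} (hs : 0 < s.re)
    (hz : ‖z‖ < s.re ^ α) :
    ∫ t in Ioi (0 : ℝ), cexp (-(s * t)) *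
        ∑' k : ℕ, (z * (t : ℂ) ^ (α : ℂ)) ^ k / Gamma (α * k + 1)
      = s ^ ((α : ℂ) - 1) / (s ^ (α : ℂ) - z) := by
  have hs0 : s ≠ 0 := fun h ↦ by simp [h] at hs
  have hq : ‖z / s ^ (α : ℂ)‖ < 1 := by
    rw [norm_div, norm_cpow_real, div_lt_one (by positivity)]
    exact hz.trans_le (Real.rpow_le_rpow hs.le (re_le_norm s) hα)
  have hΓ0 (k : ℕ) : Gamma (α * k + 1) ≠ 0 := by
    rw [← norm_ne_zero_iff, norm_Gamma_mul_natCast_add_one hα]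
    exact (Real.Gamma_pos_of_pos (by positivity)).ne'
  calc _ = ∫ t in Ioi (0 : ℝ), cexp (-(s * t)) *
        ∑' k : ℕ, z ^ k / Gamma (α * k + 1) * (t : ℂ) ^ ((α : ℂ) * k) := by
        refine integral_congr_ae (.of_forall fun t ↦ ?_)
        simp only [mul_pow, cpow_mul_nat]
        ring_nf
    _ = ∑' k : ℕ, (z / s ^ (α : ℂ)) ^ k * s⁻¹ := by
        rw [integral_cexp_neg_mul_mul_tsum_cpow hα hs
          (summable_norm_pow_div_Gamma_mul_Gamma_div_rpow hα hs hz)]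
        refine tsum_congr fun k ↦ ?_
        rw [cpow_add _ _ hs0, cpow_mul_nat, cpow_one, div_pow]
        field_simp [hΓ0 k]
    _ = s ^ ((α : ℂ) - 1) / (s ^ (α : ℂ) - z) := by
        have hsα : s ^ (α : ℂ) ≠ 0 := by simp [cpow_eq_zero_iff, hs0]
        rw [tsum_mul_right, tsum_geometric_of_norm_lt_one hq, cpow_sub _ _ hs0, cpow_one]
        field_simp

theorem laplace_mittagLeffler_general (α lam : ℝ) (hα : 0 < α) (hlam : 0 < lam)
    (s : ℂ) (hs : lam ^ (1 / α) < s.re) :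
    (∫ t in Set.Ioi (0 : ℝ),
        Complex.exp (-s * t) *
          ∑' k : ℕ, (-(lam : ℂ) * (t : ℂ) ^ (α : ℂ)) ^ k / Complex.Gamma (α * k + 1))
      = s ^ ((α : ℂ) - 1) / ((lam : ℂ) + s ^ (α : ℂ)) := by
  have hσ : 0 < s.re := (Real.rpow_pos_of_pos hlam _).trans hs
  have hlam_lt : ‖-(lam : ℂ)‖ < s.re ^ α := by
    rwa [norm_neg, norm_real, Real.norm_of_nonneg hlam.le,
      ← Real.rpow_inv_lt_iff_of_pos hlam.le hσ.le hα, ← one_div]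
  simpa only [neg_mul, sub_neg_eq_add, add_comm]
    using integral_cexp_neg_mul_mul_mittagLeffler hα.le hσ hlam_lt

/-- Laplace transform of the Mittag-Leffler function: for `0 < α < 1`, `λ > 0` and
`Re(s) > λ^(1/α)`, `∫_0^∞ e^{-st} E_α(-λ t^α) dt = s^{α-1}/(λ + s^α)`. -/
theorem laplace_mittagLeffler (α lam : ℝ) (hα : 0 < α) (hα1 : α < 1) (hlam : 0 < lam)
    (s : ℂ) (hs : lam ^ (1 / α) < s.re) :
    (∫ t in Set.Ioi (0 : ℝ),
        Complex.exp (-s * t) *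
          ∑' k : ℕ, (-(lam : ℂ) * (t : ℂ) ^ (α : ℂ)) ^ k / Complex.Gamma (α * k + 1))
      = s ^ ((α : ℂ) - 1) / ((lam : ℂ) + s ^ (α : ℂ)) :=
  laplace_mittagLeffler_general α lam hα hlam s hs
end

section
/- Let M be a right-continuous martingale, and T, S stopping times with P(T < ∞) = 1 such that the stopped process {M(t∧T), t ≥ 0} is uniformly integrable. Then E[M(T) | F_{S∧T}] = M(S∧T) almost surely. -/
/-!
Rounding a stopping time `τ ≤ n` up to the grid `(k + 1)⁻¹ ℤ` gives stopping times with countably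
many values, for which `M τₖ = E[M n | F_τₖ]` is the discrete optional sampling theorem. These
conditional expectations are uniformly integrable and, by right-continuity, converge to `M τ`;
since `F_τ ⊆ F_τₖ`, passing to the limit in `∫ₛ M τₖ = ∫ₛ M n` for `s ∈ F_τ` gives
`M τ = E[M n | F_τ]`, and the tower property yields `M σ = E[M τ | F_σ]` for `σ ≤ τ ≤ n`.
For unbounded `τ` one truncates at `k` and uses that `s ∩ {σ ≤ k} ∈ F_{σ ∧ k}` for `s ∈ F_σ`:
`∫ M σ = ∫ M (τ ∧ k)` over these sets, and uniform integrability of `M (τ ∧ k)` lets `k → ∞`.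
Right-continuity is also what makes `M` progressively measurable, so that `M σ` is
`F_σ`-measurable.
-/

open MeasureTheory Filter Topology TopologicalSpace

noncomputable def gridCeil (k : ℕ) (t : ℝ) : ℝ := ⌈t * (k + 1)⌉ / (k + 1)

section GridCeil

variable (k : ℕ) (t : ℝ)

lemma le_gridCeil : t ≤ gridCeil k t := by
  rw [gridCeil, le_div_iff₀ k.cast_add_one_pos]
  exact Int.le_ceil _

lemma gridCeil_le_add : gridCeil k t ≤ t + 1 / (k + 1) := by
  rw [gridCeil, div_le_iff₀ k.cast_add_one_pos, add_mul, one_div_mul_cancel k.cast_add_one_ne_zero]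
  exact (Int.ceil_lt_add_one _).le

lemma gridCeil_le_iff {s : ℝ} : gridCeil k t ≤ s ↔ t ≤ ⌊s * (k + 1)⌋ / (k + 1) := by
  rw [gridCeil, div_le_iff₀ k.cast_add_one_pos, le_div_iff₀ k.cast_add_one_pos, ← Int.le_floor,
    Int.ceil_le]

lemma measurable_gridCeil : Measurable (gridCeil k) :=
  (measurable_from_top.comp (measurable_id.mul_const _).ceil).div_const _

lemma countable_range_gridCeil : (Set.range (gridCeil k)).Countable :=
  (Set.countable_range fun z : ℤ => (z : ℝ) / (k + 1)).mono <| by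
    rintro _ ⟨t, rfl⟩
    exact ⟨_, rfl⟩

lemma tendsto_gridCeil : Tendsto (gridCeil · t) atTop (𝓝[≥] t) := by
  refine tendsto_nhdsWithin_iff.mpr ⟨?_, Eventually.of_forall fun k => le_gridCeil k t⟩
  have h := tendsto_const_nhds (x := t) |>.add tendsto_one_div_add_atTop_nhds_zero_nat
  rw [add_zero] at h
  exact tendsto_of_tendsto_of_tendsto_of_le_of_le tendsto_const_nhds h (le_gridCeil · t)
    (gridCeil_le_add · t)

lemma tendsto_min_gridCeil {i : ℝ} (ht : t ≤ i) :
    Tendsto (fun k => min (gridCeil k t) i) atTop (𝓝[≥] t) := by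
  have h := ((tendsto_gridCeil t).mono_right nhdsWithin_le_nhds).min (tendsto_const_nhds (x := i))
  rw [min_eq_left ht] at h
  exact tendsto_nhdsWithin_iff.mpr ⟨h, Eventually.of_forall fun k => le_min (le_gridCeil k t) ht⟩

end GridCeil

namespace MeasureTheory

section UniformIntegrable

variable {α ι κ E : Type*} {m : MeasurableSpace α} {μ : Measure α} [NormedAddCommGroup E]

theorem UniformIntegrable.comp {p : ENNReal} {f : ι → α → E} (hf : UniformIntegrable f p μ)
    (g : κ → ι) : UniformIntegrable (f ∘ g) p μ := by
  obtain ⟨hmeas, hunif, C, hC⟩ := hf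
  refine ⟨fun k => hmeas (g k), fun ε hε => ?_, C, fun k => hC (g k)⟩
  obtain ⟨δ, hδ, h⟩ := hunif hε
  exact ⟨δ, hδ, fun k => h (g k)⟩

theorem UniformIntegrable.tendsto_eLpNorm_sub_of_ae_tendsto [IsFiniteMeasure μ]
    {f : ℕ → α → E} {g : α → E} (hf : UniformIntegrable f 1 μ)
    (hfg : ∀ᵐ x ∂μ, Tendsto (fun n => f n x) atTop (𝓝 (g x))) :
    Tendsto (fun n => eLpNorm (f n - g) 1 μ) atTop (𝓝 0) :=
  tendsto_Lp_finite_of_tendsto_ae le_rfl ENNReal.one_ne_top hf.1 (hf.memLp_of_ae_tendsto hfg)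
    hf.2.1 hfg

theorem tendsto_setIntegral_of_monotone_of_tendsto_eLpNorm [NormedSpace ℝ E]
    {f : ℕ → α → E} {g : α → E} (hf : ∀ n, Integrable (f n) μ) (hg : Integrable g μ)
    (hfg : Tendsto (fun n => eLpNorm (f n - g) 1 μ) atTop (𝓝 0))
    {s : ℕ → Set α} (hs : ∀ n, MeasurableSet (s n)) (hs_mono : Monotone s) :
    Tendsto (fun n => ∫ x in s n, f n x ∂μ) atTop (𝓝 (∫ x in ⋃ n, s n, g x ∂μ)) := by
  have hdiff : Tendsto (fun n => ∫ x in s n, (f n - g) x ∂μ) atTop (𝓝 0) := by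
    refine squeeze_zero_norm (fun n => ?_) ((ENNReal.tendsto_toReal ENNReal.zero_ne_top).comp hfg)
    calc ‖∫ x in s n, (f n - g) x ∂μ‖ ≤ ∫ x in s n, ‖(f n - g) x‖ ∂μ :=
          norm_integral_le_integral_norm _
      _ ≤ ∫ x, ‖(f n - g) x‖ ∂μ :=
          setIntegral_le_integral ((hf n).sub hg).norm (Eventually.of_forall fun _ => norm_nonneg _)
      _ = (eLpNorm (f n - g) 1 μ).toReal := by
          rw [integral_norm_eq_lintegral_enorm ((hf n).sub hg).aestronglyMeasurable,
            eLpNorm_one_eq_lintegral_enorm]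
  have hlim := hdiff.add (tendsto_setIntegral_of_monotone hs hs_mono hg.integrableOn)
  rw [zero_add] at hlim
  refine hlim.congr fun n => ?_
  rw [integral_sub' (hf n).integrableOn hg.integrableOn, sub_add_cancel]

end UniformIntegrable

section Progressive

variable {Ω β : Type*} {m : MeasurableSpace Ω} [TopologicalSpace β] [PseudoMetrizableSpace β]
  [SecondCountableTopology β] [MeasurableSpace β] [BorelSpace β]

lemma StronglyAdapted.stronglyMeasurable_comp_of_countable_range {ι : Type*} [Preorder ι]
    [MeasurableSpace ι] [MeasurableSingletonClass ι] {ℱ : Filtration ι m} {u : ι → Ω → β}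
    (hu : StronglyAdapted ℱ u) {i : ι} {φ : Set.Iic i → ι} (hφ : Measurable φ)
    (hφ_range : (Set.range φ).Countable) (hφ_le : ∀ t, φ t ≤ i) :
    StronglyMeasurable[Subtype.instMeasurableSpace.prod (ℱ i)]
      fun p : Set.Iic i × Ω => u (φ p.1) p.2 := by
  have := hφ_range.to_subtype
  have hu' : Measurable[(ℱ i).prod Subtype.instMeasurableSpace]
      fun q : Ω × Set.range φ => u q.2 q.1 := by
    refine measurable_from_prod_countable_left fun v => ?_
    obtain ⟨t, ht⟩ := v.2
    exact ((hu v).mono (ℱ.mono (ht ▸ hφ_le t))).measurable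
  have hφ' : Measurable[Subtype.instMeasurableSpace.prod (ℱ i),
      (ℱ i).prod Subtype.instMeasurableSpace]
      fun p : Set.Iic i × Ω => (p.2, (⟨φ p.1, p.1, rfl⟩ : Set.range φ)) :=
    measurable_snd.prodMk (hφ.comp measurable_fst).subtype_mk
  exact (hu'.comp hφ').stronglyMeasurable

lemma StronglyAdapted.isStronglyProgressive_of_rightContinuous {ℱ : Filtration ℝ m}
    {u : ℝ → Ω → β} (hu : StronglyAdapted ℱ u)
    (hrc : ∀ ω t, ContinuousWithinAt (u · ω) (Set.Ici t) t) :
    IsStronglyProgressive ℱ u := by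
  intro i
  refine stronglyMeasurable_of_tendsto (f := fun (k : ℕ) (p : Set.Iic i × Ω) =>
    u (min (gridCeil k p.1) i) p.2) atTop (fun k => ?_) (tendsto_pi_nhds.mpr ?_)
  · refine hu.stronglyMeasurable_comp_of_countable_range
      ((measurable_gridCeil k).comp measurable_subtype_coe |>.min measurable_const)
      (((countable_range_gridCeil k).image (min · i)).mono ?_) fun _ => min_le_right _ _
    rintro _ ⟨t, rfl⟩
    exact ⟨_, ⟨t, rfl⟩, rfl⟩
  · rintro ⟨⟨t, ht⟩, ω⟩
    exact (hrc ω t).tendsto.comp (tendsto_min_gridCeil t ht)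

end Progressive

section StoppingTime

variable {Ω : Type*} {m : MeasurableSpace Ω}

lemma IsStoppingTime.gridCeil {ℱ : Filtration ℝ m} {τ : Ω → ℝ}
    (hτ : IsStoppingTime ℱ fun ω => (τ ω : WithTop ℝ)) (k : ℕ) :
    IsStoppingTime ℱ fun ω => (gridCeil k (τ ω) : WithTop ℝ) := by
  intro t
  have hle : (⌊t * (k + 1)⌋ : ℝ) / (k + 1) ≤ t := by
    rw [div_le_iff₀ k.cast_add_one_pos]
    exact Int.floor_le _
  simp only [WithTop.coe_le_coe, gridCeil_le_iff]
  simpa only [WithTop.coe_le_coe] using ℱ.mono hle _ (hτ.measurableSet_le _)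

lemma tendsto_stoppedValue_min_natCast {β : Type*} [TopologicalSpace β] (u : ℝ → Ω → β)
    {τ : Ω → WithTop ℝ} {ω : Ω} (hω : τ ω ≠ ⊤) :
    Tendsto (fun k : ℕ => stoppedValue u (fun ω => min (τ ω) ((k : ℝ) : WithTop ℝ)) ω) atTop
      (𝓝 (stoppedValue u τ ω)) := by
  lift τ ω to ℝ using hω with t ht
  refine tendsto_const_nhds.congr' ?_
  filter_upwards [eventually_ge_atTop ⌈t⌉₊] with k hk
  rw [stoppedValue, stoppedValue, ← ht, min_eq_left (WithTop.coe_le_coe.mpr (Nat.ceil_le.mp hk))]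

end StoppingTime

namespace Martingale

variable {Ω : Type*} {m : MeasurableSpace Ω} {μ : Measure Ω} [IsFiniteMeasure μ]
  {ℱ : Filtration ℝ m} {M : ℝ → Ω → ℝ}

theorem stoppedValue_ae_eq_condExp_of_le_const_of_rightContinuous (hM : Martingale M ℱ μ)
    (hrc : ∀ ω t, ContinuousWithinAt (M · ω) (Set.Ici t) t) {τ : Ω → WithTop ℝ}
    (hτ : IsStoppingTime ℱ τ) {n : ℝ} (hτ_le : ∀ ω, τ ω ≤ n) :
    stoppedValue M τ =ᵐ[μ] μ[M n|hτ.measurableSpace] := by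
  lift τ to Ω → ℝ using fun ω => ne_top_of_le_ne_top WithTop.coe_ne_top (hτ_le ω)
  set τk : ℕ → Ω → WithTop ℝ := fun k ω => min (gridCeil k (τ ω) : WithTop ℝ) n
  have hτk : ∀ k, IsStoppingTime ℱ (τk k) := fun k => (hτ.gridCeil k).min_const n
  have hsample : ∀ k, stoppedValue M (τk k) =ᵐ[μ] μ[M n|(hτk k).measurableSpace] := fun k =>
    hM.stoppedValue_ae_eq_condExp_of_le_const_of_countable_range (hτk k)
      (fun ω => min_le_right _ _)
      (((countable_range_gridCeil k).image fun x => min (x : WithTop ℝ) n).mono (by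
        rintro _ ⟨ω, rfl⟩
        exact ⟨gridCeil k (τ ω), ⟨τ ω, rfl⟩, rfl⟩))
  have hUI : UniformIntegrable (fun k => stoppedValue M (τk k)) 1 μ :=
    (uniformIntegrable_congr_ae hsample).mpr
      ((hM.integrable n).uniformIntegrable_condExp fun k => (hτk k).measurableSpace_le)
  have hlim : ∀ ω, Tendsto (fun k => stoppedValue M (τk k) ω) atTop
      (𝓝 (stoppedValue M (fun ω => τ ω) ω)) := fun ω => by
    simp only [stoppedValue, τk, ← WithTop.coe_min, WithTop.untopD_coe]
    exact (hrc ω (τ ω)).tendsto.comp (tendsto_min_gridCeil _ (WithTop.coe_le_coe.mp (hτ_le ω)))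
  have hint : Integrable (stoppedValue M fun ω => τ ω) μ :=
    hUI.integrable_of_ae_tendsto (ae_of_all _ hlim)
  refine ae_eq_condExp_of_forall_setIntegral_eq hτ.measurableSpace_le (hM.integrable n)
    (fun s _ _ => hint.integrableOn) (fun s hs _ => ?_)
    (measurable_stoppedValue (hM.stronglyAdapted.isStronglyProgressive_of_rightContinuous hrc)
      hτ).stronglyMeasurable.aestronglyMeasurable
  have hconst : ∀ k, ∫ ω in s, stoppedValue M (τk k) ω ∂μ = ∫ ω in s, M n ω ∂μ := fun k => by
    rw [setIntegral_congr_ae (hτ.measurableSpace_le s hs) ((hsample k).mono fun _ h _ => h)]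
    exact setIntegral_condExp (hτk k).measurableSpace_le (hM.integrable n)
      (hτ.measurableSpace_mono (hτk k) (fun ω => le_min (WithTop.coe_le_coe.mpr
        (le_gridCeil k (τ ω))) (hτ_le ω)) s hs)
  have hconv := tendsto_setIntegral_of_L1' _ hint.aestronglyMeasurable
    (Eventually.of_forall fun k => (integrable_congr (hsample k)).mpr integrable_condExp)
    (hUI.tendsto_eLpNorm_sub_of_ae_tendsto (ae_of_all _ hlim)) s
  exact tendsto_nhds_unique hconv (tendsto_const_nhds.congr fun k => (hconst k).symm)

theorem stoppedValue_ae_eq_condExp_of_le_of_rightContinuous (hM : Martingale M ℱ μ)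
    (hrc : ∀ ω t, ContinuousWithinAt (M · ω) (Set.Ici t) t) {σ τ : Ω → WithTop ℝ}
    (hσ : IsStoppingTime ℱ σ) (hτ : IsStoppingTime ℱ τ) (hστ : σ ≤ τ) {n : ℝ}
    (hτ_le : ∀ ω, τ ω ≤ n) :
    stoppedValue M σ =ᵐ[μ] μ[stoppedValue M τ|hσ.measurableSpace] := by
  have hτn := hM.stoppedValue_ae_eq_condExp_of_le_const_of_rightContinuous hrc hτ hτ_le
  calc stoppedValue M σ
      =ᵐ[μ] μ[M n|hσ.measurableSpace] :=
        hM.stoppedValue_ae_eq_condExp_of_le_const_of_rightContinuous hrc hσ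
          fun ω => (hστ ω).trans (hτ_le ω)
    _ =ᵐ[μ] μ[μ[M n|hτ.measurableSpace]|hσ.measurableSpace] :=
        (condExp_condExp_of_le (hσ.measurableSpace_mono hτ hστ) hτ.measurableSpace_le).symm
    _ =ᵐ[μ] μ[stoppedValue M τ|hσ.measurableSpace] := condExp_congr_ae hτn.symm

theorem stoppedValue_min_const_ae_eq_condExp_of_le (hM : Martingale M ℱ μ)
    (hrc : ∀ ω t, ContinuousWithinAt (M · ω) (Set.Ici t) t) {σ τ : Ω → WithTop ℝ}
    (hσ : IsStoppingTime ℱ σ) (hτ : IsStoppingTime ℱ τ) (hστ : σ ≤ τ) (t : ℝ) :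
    stoppedValue M (fun ω => min (σ ω) t) =ᵐ[μ]
      μ[stoppedValue M (fun ω => min (τ ω) t)|(hσ.min_const t).measurableSpace] :=
  hM.stoppedValue_ae_eq_condExp_of_le_of_rightContinuous hrc (hσ.min_const t) (hτ.min_const t)
    (fun ω => min_le_min_right _ (hστ ω)) (fun _ => min_le_right _ _)

theorem setIntegral_inter_le_const_stoppedValue_eq (hM : Martingale M ℱ μ)
    (hrc : ∀ ω t, ContinuousWithinAt (M · ω) (Set.Ici t) t) {σ τ : Ω → WithTop ℝ}
    (hσ : IsStoppingTime ℱ σ) (hτ : IsStoppingTime ℱ τ) (hστ : σ ≤ τ) {s : Set Ω}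
    (hs : MeasurableSet[hσ.measurableSpace] s) (t : ℝ) :
    ∫ ω in s ∩ {ω | σ ω ≤ t}, stoppedValue M σ ω ∂μ =
      ∫ ω in s ∩ {ω | σ ω ≤ t}, stoppedValue M (fun ω => min (τ ω) t) ω ∂μ := by
  have hst := (hσ.measurableSet_inter_le_const_iff s t).mp (hs.inter (hσ.measurableSet_le' t))
  have hst₀ := (hσ.min_const t).measurableSpace_le _ hst
  have hτ_int : Integrable (stoppedValue M fun ω => min (τ ω) t) μ :=
    (integrable_congr (hM.stoppedValue_ae_eq_condExp_of_le_const_of_rightContinuous hrc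
      (hτ.min_const t) fun _ => min_le_right _ _)).mpr integrable_condExp
  calc ∫ ω in s ∩ {ω | σ ω ≤ t}, stoppedValue M σ ω ∂μ
      = ∫ ω in s ∩ {ω | σ ω ≤ t}, stoppedValue M (fun ω => min (σ ω) t) ω ∂μ :=
        setIntegral_congr_fun hst₀ fun ω (hω : ω ∈ s ∧ σ ω ≤ t) => by
          simp only [stoppedValue, min_eq_left hω.2]
    _ = ∫ ω in s ∩ {ω | σ ω ≤ t},
          (μ[stoppedValue M (fun ω => min (τ ω) t)|(hσ.min_const t).measurableSpace]) ω ∂μ :=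
        setIntegral_congr_ae hst₀
          ((hM.stoppedValue_min_const_ae_eq_condExp_of_le hrc hσ hτ hστ t).mono fun _ h _ => h)
    _ = ∫ ω in s ∩ {ω | σ ω ≤ t}, stoppedValue M (fun ω => min (τ ω) t) ω ∂μ :=
        setIntegral_condExp (hσ.min_const t).measurableSpace_le hτ_int hst

theorem integrable_stoppedValue_of_le_of_uniformIntegrable (hM : Martingale M ℱ μ)
    (hrc : ∀ ω t, ContinuousWithinAt (M · ω) (Set.Ici t) t) {σ τ : Ω → WithTop ℝ}
    (hσ : IsStoppingTime ℱ σ) (hτ : IsStoppingTime ℱ τ) (hστ : σ ≤ τ) (hτ_fin : ∀ ω, τ ω ≠ ⊤)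
    (hUI : UniformIntegrable (fun k : ℕ => stoppedValue M fun ω => min (τ ω) (k : ℝ)) 1 μ) :
    Integrable (stoppedValue M σ) μ := by
  have hprog := hM.stronglyAdapted.isStronglyProgressive_of_rightContinuous hrc
  have hmeas : ∀ {ρ : Ω → WithTop ℝ} (hρ : IsStoppingTime ℱ ρ),
      AEStronglyMeasurable (stoppedValue M ρ) μ := fun hρ =>
    ((measurable_stoppedValue hprog hρ).mono hρ.measurableSpace_le le_rfl).aestronglyMeasurable
  obtain ⟨C, hC⟩ := hUI.2.2
  have hbound : eLpNorm (stoppedValue M σ) 1 μ ≤ C := by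
    refine Lp.eLpNorm_le_of_ae_tendsto (Eventually.of_forall fun k : ℕ => ?_)
      (fun k : ℕ => hmeas (hσ.min_const k))
      (ae_of_all _ fun ω => tendsto_stoppedValue_min_natCast M
        (ne_top_of_le_ne_top (hτ_fin ω) (hστ ω)))
    rw [eLpNorm_congr_ae (hM.stoppedValue_min_const_ae_eq_condExp_of_le hrc hσ hτ hστ k)]
    exact (eLpNorm_condExp_le_eLpNorm _ le_rfl).trans (hC k)
  exact memLp_one_iff_integrable.mp ⟨hmeas hσ, hbound.trans_lt ENNReal.coe_lt_top⟩

theorem condExp_stoppedValue_ae_eq_of_uniformIntegrable (hM : Martingale M ℱ μ)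
    (hrc : ∀ ω t, ContinuousWithinAt (M · ω) (Set.Ici t) t) {σ τ : Ω → WithTop ℝ}
    (hσ : IsStoppingTime ℱ σ) (hτ : IsStoppingTime ℱ τ) (hστ : σ ≤ τ) (hτ_fin : ∀ ω, τ ω ≠ ⊤)
    (hUI : UniformIntegrable (fun k : ℕ => stoppedValue M fun ω => min (τ ω) (k : ℝ)) 1 μ) :
    μ[stoppedValue M τ|hσ.measurableSpace] =ᵐ[μ] stoppedValue M σ := by
  have hτ_lim := fun ω => tendsto_stoppedValue_min_natCast M (hτ_fin ω)
  have hτ_int : Integrable (stoppedValue M τ) μ := hUI.integrable_of_ae_tendsto (ae_of_all _ hτ_lim)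
  have hσ_int := hM.integrable_stoppedValue_of_le_of_uniformIntegrable hrc hσ hτ hστ hτ_fin hUI
  refine (ae_eq_condExp_of_forall_setIntegral_eq hσ.measurableSpace_le hτ_int
    (fun s _ _ => hσ_int.integrableOn) (fun s hs _ => ?_)
    (measurable_stoppedValue (hM.stronglyAdapted.isStronglyProgressive_of_rightContinuous hrc)
      hσ).stronglyMeasurable.aestronglyMeasurable).symm
  set A : ℕ → Set Ω := fun k => s ∩ {ω | σ ω ≤ (k : ℝ)}
  have hA : ∀ k, MeasurableSet (A k) := fun k =>
    hσ.measurableSpace_le _ (hs.inter (hσ.measurableSet_le' k))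
  have hA_mono : Monotone A := fun k l hkl => Set.inter_subset_inter_right s <|
    Set.ofPred_subset_ofPred.mpr fun ω hω => hω.trans (by exact_mod_cast hkl)
  have hA_iUnion : ⋃ k, A k = s := by
    refine (Set.iUnion_subset fun k => Set.inter_subset_left).antisymm fun ω hω => ?_
    obtain ⟨t, ht⟩ := WithTop.ne_top_iff_exists.mp (hτ_fin ω)
    refine Set.mem_iUnion.mpr ⟨⌈t⌉₊, hω, (hστ ω).trans ?_⟩
    rw [← ht]
    exact WithTop.coe_le_coe.mpr (Nat.le_ceil t)
  rw [← hA_iUnion]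
  exact tendsto_nhds_unique
    ((tendsto_setIntegral_of_monotone hA hA_mono hσ_int.integrableOn).congr fun (k : ℕ) =>
      hM.setIntegral_inter_le_const_stoppedValue_eq hrc hσ hτ hστ hs k)
    (tendsto_setIntegral_of_monotone_of_tendsto_eLpNorm
      (fun k => memLp_one_iff_integrable.mp (hUI.memLp k)) hτ_int
      (hUI.tendsto_eLpNorm_sub_of_ae_tendsto (ae_of_all _ hτ_lim)) hA hA_mono)

end Martingale

end MeasureTheory

theorem optional_sampling_general
    {Ω : Type*} {m0 : MeasurableSpace Ω} (μ : Measure Ω) [IsProbabilityMeasure μ]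
    (ℱ : Filtration ℝ m0) (M : ℝ → Ω → ℝ)
    (hM : Martingale M ℱ μ)
    (hrc : ∀ ω, ∀ t : ℝ, ContinuousWithinAt (fun s => M s ω) (Set.Ici t) t)
    (T S : Ω → ℝ) (hT : IsStoppingTime ℱ (fun ω => (T ω : WithTop ℝ)))
    (hS : IsStoppingTime ℱ (fun ω => (S ω : WithTop ℝ)))
    (hUI : UniformIntegrable (fun t : ℝ => fun ω => M (min t (T ω)) ω) 1 μ) :
    μ[fun ω => M (T ω) ω|(hS.min hT).measurableSpace]
      =ᵐ[μ] fun ω => M (min (S ω) (T ω)) ω := by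
  have hUI' : UniformIntegrable
      (fun k : ℕ => stoppedValue M fun ω => min (T ω : WithTop ℝ) (k : ℝ)) 1 μ := by
    convert hUI.comp (Nat.cast : ℕ → ℝ) using 1
    funext k ω
    simp only [stoppedValue, Function.comp_apply, ← WithTop.coe_min, WithTop.untopD_coe, min_comm]
  have hsample := hM.condExp_stoppedValue_ae_eq_of_uniformIntegrable hrc (hS.min hT) hT
    (fun ω => min_le_right _ _) (fun _ => WithTop.coe_ne_top) hUI'
  refine hsample.trans (EventuallyEq.of_eq (funext fun ω => ?_))
  simp only [stoppedValue, ← WithTop.coe_min, WithTop.untopD_coe]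

/-- Doob's optional sampling theorem: if `M` is a right-continuous martingale,
`T`, `S` are stopping times, and the stopped process `{M(t ∧ T)}` is uniformly
integrable, then `E[M(T) | F_{S∧T}] = M(S∧T)` a.s. -/
theorem optional_sampling
    {Ω : Type*} {m0 : MeasurableSpace Ω} (μ : Measure Ω) [IsProbabilityMeasure μ]
    (ℱ : Filtration ℝ m0) (M : ℝ → Ω → ℝ)
    (hM : Martingale M ℱ μ)
    (hrc : ∀ ω, ∀ t : ℝ, ContinuousWithinAt (fun s => M s ω) (Set.Ici t) t)
    (T S : Ω → ℝ) (hT : IsStoppingTime ℱ (fun ω => (T ω : WithTop ℝ)))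
    (hS : IsStoppingTime ℱ (fun ω => (S ω : WithTop ℝ)))
    (hTnn : ∀ ω, 0 ≤ T ω) (hSnn : ∀ ω, 0 ≤ S ω)
    (hUI : UniformIntegrable (fun t : ℝ => fun ω => M (min t (T ω)) ω) 1 μ) :
    μ[fun ω => M (T ω) ω|(hS.min hT).measurableSpace]
      =ᵐ[μ] fun ω => M (min (S ω) (T ω)) ω :=
  optional_sampling_general μ ℱ M hM hrc T S hT hS hUI
end

section
/- Let p̃_k(s) be the Laplace transform of the marginal probabilities p_k(t) = P{N^{α₁,α₂}(t) = k} of the mixed-fractional Poisson process. Then p̃_k(s) = λ^k (C₁ s^{α₁} + C₂ s^{α₂}) / (s (λ + C₁ s^{α₁} + C₂ s^{α₂})^{k+1}) for k = 0, 1, 2, … -/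
/-!
Since all integrands are nonnegative, Fubini lets us integrate in `t` first, which replaces the
density `f t u` of `Y(t)` by its Laplace transform `(φ(s)/s) e^{-u φ(s)}`. Against the Poisson
weight `e^{-λu} (λu)^k / k!` this leaves the Gamma integral
`∫₀^∞ u^k e^{-(λ + φ(s)) u} du = k! / (λ + φ(s))^{k+1}`.
-/

open MeasureTheory Real Set Nat

theorem integral_pow_mul_exp_neg_mul_Ioi {b : ℝ} (hb : 0 < b) (k : ℕ) :
    ∫ u in Ioi (0 : ℝ), u ^ k * exp (-(b * u)) = k ! / b ^ (k + 1) := by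
  have h := integral_rpow_mul_exp_neg_mul_Ioi (a := k + 1) (by positivity) hb
  simp only [add_sub_cancel_right, Real.rpow_natCast] at h
  rw [h, Gamma_nat_eq_factorial, ← Nat.cast_add_one, Real.rpow_natCast, one_div_pow,
    one_div_mul_eq_div]

theorem poisson_weight_mul_exp_neg (lam Φ u : ℝ) (k : ℕ) :
    exp (-(lam * u)) * (lam * u) ^ k / k ! * exp (-(u * Φ))
      = lam ^ k / k ! * (u ^ k * exp (-((lam + Φ) * u))) := by
  rw [show -((lam + Φ) * u) = -(lam * u) + -(u * Φ) by ring, exp_add, mul_pow]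
  ring

theorem integral_poisson_weight_mul_exp_neg_Ioi {lam Φ : ℝ} (h : 0 < lam + Φ) (k : ℕ) :
    ∫ u in Ioi (0 : ℝ), exp (-(lam * u)) * (lam * u) ^ k / k ! * exp (-(u * Φ))
      = lam ^ k / (lam + Φ) ^ (k + 1) := by
  simp_rw [poisson_weight_mul_exp_neg]
  rw [integral_const_mul, integral_pow_mul_exp_neg_mul_Ioi h]
  field_simp

theorem integral_integral_swap_of_nonneg {α β : Type*} [MeasurableSpace α] [MeasurableSpace β]
    {μ : Measure α} {ν : Measure β} [SFinite μ] [SFinite ν] {K : α → β → ℝ}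
    (hK : AEStronglyMeasurable (Function.uncurry K) (μ.prod ν))
    (hK_nonneg : ∀ᵐ y ∂ν, ∀ᵐ x ∂μ, 0 ≤ K x y)
    (hK_int : ∀ᵐ y ∂ν, Integrable (K · y) μ)
    (hK_int' : Integrable (fun y => ∫ x, K x y ∂μ) ν) :
    ∫ x, ∫ y, K x y ∂ν ∂μ = ∫ y, ∫ x, K x y ∂μ ∂ν := by
  refine integral_integral_swap ((integrable_prod_iff' hK).2 ⟨hK_int, hK_int'.congr ?_⟩)
  filter_upwards [hK_nonneg] with y hy
  exact integral_congr_ae (hy.mono fun x hx => (Real.norm_of_nonneg hx).symm)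

theorem integral_exp_mul_integral_mixture_Ioi {f : ℝ → ℝ → ℝ}
    (hfm : Measurable (Function.uncurry f)) (hf_nonneg : ∀ t u, 0 ≤ f t u) {s : ℝ}
    {L : ℝ → ℝ} (hf_int : ∀ u > (0 : ℝ), IntegrableOn (fun t => exp (-(s * t)) * f t u) (Ioi 0))
    (hL : ∀ u > (0 : ℝ), ∫ t in Ioi 0, exp (-(s * t)) * f t u = L u)
    {w : ℝ → ℝ} (hw : Measurable w) (hw_nonneg : ∀ u > (0 : ℝ), 0 ≤ w u)
    (hwL : IntegrableOn (fun u => w u * L u) (Ioi 0)) :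
    ∫ t in Ioi 0, exp (-(s * t)) * ∫ u in Ioi 0, w u * f t u = ∫ u in Ioi 0, w u * L u := by
  have hL_mixture : ∀ u > (0 : ℝ), ∫ t in Ioi 0, exp (-(s * t)) * (w u * f t u) = w u * L u :=
    fun u hu => by simp_rw [mul_left_comm (exp _), integral_const_mul, hL u hu]
  calc ∫ t in Ioi 0, exp (-(s * t)) * ∫ u in Ioi 0, w u * f t u
      = ∫ t in Ioi 0, ∫ u in Ioi 0, exp (-(s * t)) * (w u * f t u) := by
        simp_rw [← integral_const_mul]
    _ = ∫ u in Ioi 0, ∫ t in Ioi 0, exp (-(s * t)) * (w u * f t u) := by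
        refine integral_integral_swap_of_nonneg (by fun_prop) ?_ ?_ ?_
        · filter_upwards [self_mem_ae_restrict measurableSet_Ioi] with u (hu : 0 < u)
          exact .of_forall fun t => by have := hf_nonneg t u; have := hw_nonneg u hu; positivity
        · filter_upwards [self_mem_ae_restrict measurableSet_Ioi] with u (hu : 0 < u)
          simpa only [mul_left_comm (exp _)] using (hf_int u hu).const_mul (w u)
        · refine hwL.congr ?_
          filter_upwards [self_mem_ae_restrict measurableSet_Ioi] with u hu
          exact (hL_mixture u hu).symm
    _ = ∫ u in Ioi 0, w u * L u := setIntegral_congr_fun measurableSet_Ioi hL_mixture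

theorem mfpp_marginal_laplace_general
    (lam C₁ C₂ α₁ α₂ : ℝ) (hlam : 0 < lam) (hC₁ : 0 ≤ C₁) (hC₂ : 0 < C₂)
    (f : ℝ → ℝ → ℝ)
    (hfm : Measurable (Function.uncurry f)) (hfnn : ∀ t u, 0 ≤ f t u)
    (hf : ∀ u ≥ (0 : ℝ), ∀ s > (0 : ℝ),
      (∫ t in Set.Ioi (0 : ℝ), Real.exp (-(s * t)) * f t u)
        = ((C₁ * s ^ α₁ + C₂ * s ^ α₂) / s)
            * Real.exp (-(u * (C₁ * s ^ α₁ + C₂ * s ^ α₂))))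
    (p : ℕ → ℝ → ℝ)
    (hp : ∀ k t, p k t
      = ∫ u in Set.Ioi (0 : ℝ),
          Real.exp (-(lam * u)) * (lam * u) ^ k / (Nat.factorial k) * f t u) :
    ∀ s > (0 : ℝ), ∀ k : ℕ,
      (∫ t in Set.Ioi (0 : ℝ), Real.exp (-(s * t)) * p k t)
        = lam ^ k * (C₁ * s ^ α₁ + C₂ * s ^ α₂)
            / (s * (lam + C₁ * s ^ α₁ + C₂ * s ^ α₂) ^ (k + 1)) := by
  intro s hs k
  rw [add_assoc]
  set Φ := C₁ * s ^ α₁ + C₂ * s ^ α₂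
  have hΦ : 0 < Φ := by positivity
  have hpoisson := integral_poisson_weight_mul_exp_neg_Ioi (add_pos hlam hΦ) k
  have hpoisson_int : IntegrableOn
      (fun u => exp (-(lam * u)) * (lam * u) ^ k / k ! * exp (-(u * Φ))) (Ioi 0) :=
    Integrable.of_integral_ne_zero (by rw [hpoisson]; positivity)
  simp_rw [hp]
  rw [integral_exp_mul_integral_mixture_Ioi hfm hfnn (L := fun u => Φ / s * exp (-(u * Φ)))
    (fun u hu => .of_integral_ne_zero (by rw [hf u hu.le s hs]; positivity))
    (fun u hu => hf u hu.le s hs) (by fun_prop) (fun u (hu : 0 < u) => by positivity)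
    ((hpoisson_int.const_mul (Φ / s)).congr (.of_forall fun u => mul_left_comm _ _ _))]
  simp_rw [mul_left_comm _ (Φ / s)]
  rw [integral_const_mul, hpoisson]
  field_simp

/-- Laplace transform of the marginal probabilities of the mixed-fractional
Poisson process: `p̃_k(s) = λ^k (C₁ s^{α₁} + C₂ s^{α₂}) / (s (λ + C₁ s^{α₁} + C₂ s^{α₂})^{k+1})`. -/
theorem mfpp_marginal_laplace
    (lam C₁ C₂ α₁ α₂ : ℝ) (hlam : 0 < lam) (hC₁ : 0 ≤ C₁) (hC₂ : 0 < C₂)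
    (hsum : C₁ + C₂ = 1) (h1 : 0 < α₁) (h12 : α₁ < α₂) (h2 : α₂ < 1)
    (f : ℝ → ℝ → ℝ)
    (hfm : Measurable (Function.uncurry f)) (hfnn : ∀ t u, 0 ≤ f t u)
    (hf : ∀ u ≥ (0 : ℝ), ∀ s > (0 : ℝ),
      (∫ t in Set.Ioi (0 : ℝ), Real.exp (-(s * t)) * f t u)
        = ((C₁ * s ^ α₁ + C₂ * s ^ α₂) / s)
            * Real.exp (-(u * (C₁ * s ^ α₁ + C₂ * s ^ α₂))))
    (p : ℕ → ℝ → ℝ)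
    (hp : ∀ k t, p k t
      = ∫ u in Set.Ioi (0 : ℝ),
          Real.exp (-(lam * u)) * (lam * u) ^ k / (Nat.factorial k) * f t u) :
    ∀ s > (0 : ℝ), ∀ k : ℕ,
      (∫ t in Set.Ioi (0 : ℝ), Real.exp (-(s * t)) * p k t)
        = lam ^ k * (C₁ * s ^ α₁ + C₂ * s ^ α₂)
            / (s * (lam + C₁ * s ^ α₁ + C₂ * s ^ α₂) ^ (k + 1)) :=
  mfpp_marginal_laplace_general lam C₁ C₂ α₁ α₂ hlam hC₁ hC₂ f hfm hfnn hf p hp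
end
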